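/- arXiv:1511.07180 — 2 statements merged into one kernel-verified Lean document; each statement's English description precedes it below -/
import Mathlib

section
/- For every position 2 ≤ c ≤ n, the set S_c := { m ≥ 1 : c−m ≥ 1, c+m−1 ≤ n, and w[c−m+t] = w[c+t] for all 0 ≤ t < m } (the arm lengths of squares centred at c) is nonempty if and only if the set R_c := { per(w[i'..j']) : w[i'..j'] is a run of w with i' + per(w[i'..j']) ≤ c and c + per(w[i'..j']) − 1 ≤ j' } is nonempty, and in that case min S_c = min R_c (i.e., the local period at position c equals the minimum period of a run whose aligned square of one period covers c as its centre). -/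
/- Words are `List α`, positions are 1-based.  `ltr w i` is the letter at position `i`,
`fac w i j` is the factor `w[i..j]` (empty when `i > j`). -/

variable {α : Type*}

def ltr (w : List α) (i : ℕ) : Option α := w[i - 1]?

def fac (w : List α) (i j : ℕ) : List α := (w.take j).drop (i - 1)

/-- `p` is a period of the word `u` (1-based positions). -/
def IsPeriod (u : List α) (p : ℕ) : Prop :=
  1 ≤ p ∧ p ≤ u.length ∧ ∀ k, 1 ≤ k → k ≤ u.length - p → ltr u k = ltr u (k + p)

/-- `per u` : the smallest period of `u`. -/
noncomputable def per (u : List α) : ℕ := sInf {p | IsPeriod u p}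

/-- `w[i'..j']` is a run of `w`: its smallest period `p` satisfies `2p ≤ j'-i'+1`,
and the factor is maximal with respect to this period. -/
noncomputable def IsRun (w : List α) (i' j' : ℕ) : Prop :=
  1 ≤ i' ∧ i' ≤ j' ∧ j' ≤ w.length ∧
  2 * per (fac w i' j') ≤ j' - i' + 1 ∧
  (i' = 1 ∨ ltr w (i' - 1) ≠ ltr w (i' + per (fac w i' j') - 1)) ∧
  (j' = w.length ∨ ltr w (j' + 1) ≠ ltr w (j' - per (fac w i' j') + 1))

/-- `S_c` : the set of arm lengths of squares centred at position `c`. -/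
def ScSet (w : List α) (c : ℕ) : Set ℕ :=
  {m | 1 ≤ m ∧ 1 ≤ c - m ∧ c + m - 1 ≤ w.length ∧
    ∀ t < m, ltr w (c - m + t) = ltr w (c + t)}

/-- `R_c` : the set of periods of runs of `w` whose aligned square of one period
covers `c` as its centre. -/
noncomputable def RcSet (w : List α) (c : ℕ) : Set ℕ :=
  {p | ∃ i' j' : ℕ, IsRun w i' j' ∧ p = per (fac w i' j') ∧
    i' + p ≤ c ∧ c + p - 1 ≤ j'}

/- ### Auxiliary lemmas -/

lemma fac_length (w : List α) (i j : ℕ) (h1 : 1 ≤ i) (h2 : i ≤ j) (h3 : j ≤ w.length) :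
    (fac w i j).length = j - i + 1 := by
  simp only [fac, List.length_drop, List.length_take]
  omega

lemma ltr_fac (w : List α) (i j k : ℕ) (hi : 1 ≤ i) (hk : 1 ≤ k) (h : i + k - 1 ≤ j) :
    ltr (fac w i j) k = ltr w (i + k - 1) := by
  unfold ltr fac
  rw [List.getElem?_drop]
  have h1 : i - 1 + (k - 1) = i + k - 1 - 1 := by omega
  rw [h1, List.getElem?_take_of_lt (by omega)]

lemma isPeriod_length {u : List α} (h : u ≠ []) : IsPeriod u u.length := by
  refine ⟨?_, le_refl _, fun k hk1 hk2 => ?_⟩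
  · exact List.length_pos_iff.mpr h
  · omega

lemma per_isPeriod {u : List α} (h : u ≠ []) : IsPeriod u (per u) :=
  Nat.sInf_mem (⟨u.length, isPeriod_length h⟩ : {p | IsPeriod u p}.Nonempty)

lemma per_le {u : List α} {p : ℕ} (h : IsPeriod u p) : per u ≤ p :=
  Nat.sInf_le h

lemma fac_ne_nil (w : List α) {i j : ℕ} (h1 : 1 ≤ i) (h2 : i ≤ j) (h3 : j ≤ w.length) :
    fac w i j ≠ [] := by
  have := fac_length w i j h1 h2 h3
  intro hn
  rw [hn] at this
  simp only [List.length_nil] at this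
  omega

/-- Transfer of a period of a factor to the whole word. -/
lemma period_transfer {w : List α} {i j p : ℕ} (hi : 1 ≤ i) (hij : i ≤ j)
    (hj : j ≤ w.length) (hp : IsPeriod (fac w i j) p) :
    ∀ k, i ≤ k → k + p ≤ j → ltr w k = ltr w (k + p) := by
  obtain ⟨hp1, hp2, hfun⟩ := hp
  have hlen := fac_length w i j hi hij hj
  intro k hk1 hk2
  have h1 : ltr (fac w i j) (k - i + 1) = ltr (fac w i j) (k - i + 1 + p) :=
    hfun (k - i + 1) (by omega) (by omega)
  rw [ltr_fac w i j (k - i + 1) hi (by omega) (by omega),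
      ltr_fac w i j (k - i + 1 + p) hi (by omega) (by omega)] at h1
  have e1 : i + (k - i + 1) - 1 = k := by omega
  have e2 : i + (k - i + 1 + p) - 1 = k + p := by omega
  rwa [e1, e2] at h1

/-- Conversely: a pointwise period on `[i,j]` gives a period of the factor. -/
lemma period_of_pointwise {w : List α} {i j p : ℕ} (hi : 1 ≤ i) (hij : i ≤ j)
    (hj : j ≤ w.length) (hp1 : 1 ≤ p) (hp2 : p ≤ j - i + 1)
    (h : ∀ k, i ≤ k → k + p ≤ j → ltr w k = ltr w (k + p)) :
    IsPeriod (fac w i j) p := by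
  have hlen := fac_length w i j hi hij hj
  refine ⟨hp1, by omega, fun k hk1 hk2 => ?_⟩
  rw [hlen] at hk2
  rw [ltr_fac w i j k hi hk1 (by omega),
      ltr_fac w i j (k + p) hi (by omega) (by omega)]
  have e : i + (k + p) - 1 = (i + k - 1) + p := by omega
  rw [e]
  exact h (i + k - 1) (by omega) (by omega)

/-- Every element of `R_c` lies in `S_c`. -/
lemma Rc_subset_Sc {w : List α} {c p : ℕ} (hc : 2 ≤ c) (hp : p ∈ RcSet w c) :
    p ∈ ScSet w c := by
  obtain ⟨i', j', hrun, hpeq, hic, hcj⟩ := hp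
  obtain ⟨h1, h2, h3, h4, _, _⟩ := hrun
  have hne := fac_ne_nil w h1 h2 h3
  have hper := per_isPeriod hne
  rw [← hpeq] at hper
  have hp1 : 1 ≤ p := hper.1
  have htr := period_transfer h1 h2 h3 hper
  refine ⟨hp1, by omega, by omega, fun t ht => ?_⟩
  have := htr (c - p + t) (by omega) (by omega)
  have e : c - p + t + p = c + t := by omega
  rwa [e] at this

/- ### Main theorem -/

theorem local_period_eq_min_run_period
    (w : List α) (n : ℕ) (hlen : w.length = n) (hn : 1 ≤ n)
    (c : ℕ) (hc : 2 ≤ c) (hcn : c ≤ n) :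
    ((ScSet w c).Nonempty ↔ (RcSet w c).Nonempty) ∧
    ((ScSet w c).Nonempty → sInf (ScSet w c) = sInf (RcSet w c)) := by
  -- Main construction: if `S_c` is nonempty, then `m := sInf (S_c) ∈ R_c`.
  have key : (ScSet w c).Nonempty → sInf (ScSet w c) ∈ RcSet w c := by
    intro hS
    set m := sInf (ScSet w c) with hm
    have hmS : m ∈ ScSet w c := Nat.sInf_mem hS
    obtain ⟨hm1, hm2, hm3, hmsq⟩ := hmS
    -- pointwise period on the square positions
    have hsq : ∀ k, c - m ≤ k → k + m ≤ c + m - 1 → ltr w k = ltr w (k + m) := by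
      intro k hk1 hk2
      have := hmsq (k - (c - m)) (by omega)
      have e1 : c - m + (k - (c - m)) = k := by omega
      have e2 : c + (k - (c - m)) = k + m := by omega
      rwa [e1, e2] at this
    -- left extension
    set L : Set ℕ := {i | 1 ≤ i ∧ i ≤ c - m ∧
      ∀ k, i ≤ k → k + m ≤ c + m - 1 → ltr w k = ltr w (k + m)} with hL
    have hLmem : c - m ∈ L := ⟨hm2, le_refl _, hsq⟩
    set i' := sInf L with hi'
    have hi'mem : i' ∈ L := Nat.sInf_mem ⟨c - m, hLmem⟩
    obtain ⟨hi'1, hi'2, hi'per⟩ := hi'mem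
    -- left maximality
    have hleft : i' = 1 ∨ ltr w (i' - 1) ≠ ltr w (i' - 1 + m) := by
      by_cases h1 : i' = 1
      · exact Or.inl h1
      · right
        intro heq
        have hnot : i' - 1 ∉ L := fun hmem => by
          have := Nat.sInf_le hmem
          omega
        apply hnot
        refine ⟨by omega, by omega, fun k hk1 hk2 => ?_⟩
        rcases Nat.lt_or_ge k i' with hlt | hge
        · have : k = i' - 1 := by omega
          rwa [this]
        · exact hi'per k hge hk2
    -- right extension
    set R : Set ℕ := {j | c + m - 1 ≤ j ∧ j ≤ w.length ∧
      ∀ k, c - m ≤ k → k + m ≤ j → ltr w k = ltr w (k + m)} with hR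
    have hRmem : c + m - 1 ∈ R := ⟨le_refl _, hm3, hsq⟩
    have hRbdd : BddAbove R := ⟨w.length, fun x hx => hx.2.1⟩
    set j' := sSup R with hj'
    have hj'mem : j' ∈ R := Nat.sSup_mem ⟨c + m - 1, hRmem⟩ hRbdd
    obtain ⟨hj'1, hj'2, hj'per⟩ := hj'mem
    -- right maximality
    have hright : j' = w.length ∨ ltr w (j' + 1 - m) ≠ ltr w (j' + 1) := by
      by_cases h1 : j' = w.length
      · exact Or.inl h1
      · right
        intro heq
        have hnot : j' + 1 ∉ R := fun hmem => by
          have := le_csSup hRbdd hmem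
          omega
        apply hnot
        refine ⟨by omega, by omega, fun k hk1 hk2 => ?_⟩
        rcases Nat.lt_or_ge (k + m) (j' + 1) with hlt | hge
        · exact hj'per k hk1 (by omega)
        · have hk : k = j' + 1 - m := by omega
          have e2 : j' + 1 - m + m = j' + 1 := by omega
          rw [hk, e2]
          exact heq
    have hcmlen : c + m - 1 ≤ w.length := hm3
    have hij : i' ≤ j' := by omega
    -- m is a period of fac w i' j'
    have hmper : IsPeriod (fac w i' j') m := by
      refine period_of_pointwise hi'1 hij hj'2 hm1 (by omega) (fun k hk1 hk2 => ?_)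
      rcases le_or_gt (k + m) (c + m - 1) with h | h
      · exact hi'per k hk1 h
      · exact hj'per k (by omega) hk2
    -- per (fac w i' j') = m
    have hperm : per (fac w i' j') = m := by
      have hle : per (fac w i' j') ≤ m := per_le hmper
      rcases Nat.eq_or_lt_of_le hle with h | h
      · exact h
      · exfalso
        set q := per (fac w i' j') with hq
        have hne := fac_ne_nil w hi'1 hij hj'2
        have hqper := per_isPeriod hne
        rw [← hq] at hqper
        have hq1 : 1 ≤ q := hqper.1
        have htr := period_transfer hi'1 hij hj'2 hqper
        have hqS : q ∈ ScSet w c := by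
          refine ⟨hq1, by omega, by omega, fun t ht => ?_⟩
          have := htr (c - q + t) (by omega) (by omega)
          have e : c - q + t + q = c + t := by omega
          rwa [e] at this
        have := Nat.sInf_le hqS
        omega
    -- assemble the run
    refine ⟨i', j', ⟨hi'1, hij, hj'2, ?_, ?_, ?_⟩, hperm.symm, by omega, by omega⟩
    · rw [hperm]; omega
    · rw [hperm]
      rcases hleft with h | h
      · exact Or.inl h
      · right
        have e : i' - 1 + m = i' + m - 1 := by omega
        rwa [e] at h
    · rw [hperm]
      rcases hright with h | h
      · exact Or.inl h
      · right
        have e : j' + 1 - m = j' - m + 1 := by omega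
        intro heq
        exact h (by rw [e]; exact heq.symm)
  constructor
  · constructor
    · intro hS
      exact ⟨sInf (ScSet w c), key hS⟩
    · rintro ⟨p, hp⟩
      exact ⟨p, Rc_subset_Sc hc hp⟩
  · intro hS
    have h1 : sInf (RcSet w c) ≤ sInf (ScSet w c) := Nat.sInf_le (key hS)
    have hRne : (RcSet w c).Nonempty := ⟨sInf (ScSet w c), key hS⟩
    have h2 : sInf (ScSet w c) ≤ sInf (RcSet w c) :=
      Nat.sInf_le (Rc_subset_Sc hc (Nat.sInf_mem hRne))
    omega
end

section
/- Let g, G be integers with 0 ≤ g < G ≤ n and let 1 ≤ i ≤ n. Define LPF_{g,G}[i] := max{|u| : there exists a word v with g ≤ |v| < G such that u·v is a suffix of w[1..i−1] and u is a prefix of w[i..n]}, with max of the empty set equal to 0. Then LPF_{g,G}[i] = max({0} ∪ { min(LCP(j,i), i−j−g) : 1 ≤ j < i and min(LCP(j,i), i−j−g) ≥ max(1, i−j−G+1) }). -/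
/- Words are `List α`, positions are 1-based.  `ltr w i` is the letter at position `i`,
`fac w i j` is the factor `w[i..j]` (empty when `i > j`). -/

variable {α : Type*}

/-- `LCP w i j` : length of the longest common prefix of the suffixes `w[i..n]`, `w[j..n]`. -/
noncomputable def LCP (w : List α) (i j : ℕ) : ℕ :=
  sSup {ℓ | i + ℓ - 1 ≤ w.length ∧ j + ℓ - 1 ≤ w.length ∧
    ∀ t < ℓ, ltr w (i + t) = ltr w (j + t)}

/-- `LPF_{g,G}[i]` : the maximal `|u|` such that for some `v` with `g ≤ |v| < G`,
`u·v` is a suffix of `w[1..i-1]` and `u` is a prefix of `w[i..n]` (0 if none). -/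
noncomputable def LPFgG (w : List α) (g G i : ℕ) : ℕ :=
  sSup {m | ∃ u v : List α, u.length = m ∧ g ≤ v.length ∧ v.length < G ∧
    (u ++ v) <:+ fac w 1 (i - 1) ∧ u <+: fac w i w.length}

lemma LCP_bddAbove (w : List α) (i j : ℕ) :
    BddAbove {ℓ | i + ℓ - 1 ≤ w.length ∧ j + ℓ - 1 ≤ w.length ∧
      ∀ t < ℓ, ltr w (i + t) = ltr w (j + t)} := by
  refine ⟨w.length + 1, fun ℓ hℓ => ?_⟩
  have h1 := hℓ.1
  omega

lemma le_LCP (w : List α) (i j m : ℕ)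
    (h1 : i + m - 1 ≤ w.length) (h2 : j + m - 1 ≤ w.length)
    (h3 : ∀ t < m, ltr w (i + t) = ltr w (j + t)) : m ≤ LCP w i j :=
  le_csSup (LCP_bddAbove w i j) ⟨h1, h2, h3⟩

lemma LCP_spec (w : List α) (i j : ℕ) (hi : i - 1 ≤ w.length) (hj : j - 1 ≤ w.length) :
    i + LCP w i j - 1 ≤ w.length ∧ j + LCP w i j - 1 ≤ w.length ∧
      ∀ t < LCP w i j, ltr w (i + t) = ltr w (j + t) :=
  Nat.sSup_mem ⟨0, by
    refine ⟨by omega, by omega, fun t ht => absurd ht (by omega)⟩⟩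
    (LCP_bddAbove w i j)

lemma claimA (w : List α) (g G i j m : ℕ)
    (hj : 1 ≤ j) (hji : j < i) (hin : i ≤ w.length) (hm1 : 1 ≤ m)
    (hmL : m ≤ LCP w j i) (hmg : m ≤ i - j - g) (hmG : i - j - G + 1 ≤ m) :
    ∃ u v : List α, u.length = m ∧ g ≤ v.length ∧ v.length < G ∧
      (u ++ v) <:+ fac w 1 (i - 1) ∧ u <+: fac w i w.length := by
  obtain ⟨hL1, hL2, hLc⟩ := LCP_spec w j i (by omega) (by omega)
  have hchar : ∀ t < m, w[j - 1 + t]? = w[i - 1 + t]? := by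
    intro t ht
    have h := hLc t (by omega)
    simp only [ltr] at h
    rw [show j + t - 1 = j - 1 + t by omega, show i + t - 1 = i - 1 + t by omega] at h
    exact h
  refine ⟨((w.take (i - 1)).drop (j - 1)).take m, ((w.take (i - 1)).drop (j - 1)).drop m,
    ?_, ?_, ?_, ?_, ?_⟩
  · simp only [List.length_take, List.length_drop]
    omega
  · simp only [List.length_drop, List.length_take]
    omega
  · simp only [List.length_drop, List.length_take]
    omega
  · rw [List.take_append_drop]
    have hf : fac w 1 (i - 1) = w.take (i - 1) := by simp [fac]
    rw [hf]
    exact List.drop_suffix (j - 1) (w.take (i - 1))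
  · have heq : ((w.take (i - 1)).drop (j - 1)).take m = (w.drop (i - 1)).take m := by
      apply List.ext_getElem?
      intro k
      simp only [List.getElem?_take, List.getElem?_drop]
      by_cases hk : k < m
      · simp only [if_pos hk, if_pos (show j - 1 + k < i - 1 by omega)]
        exact hchar k hk
      · simp only [if_neg hk]
    rw [heq]
    have hf : fac w i w.length = w.drop (i - 1) := by simp [fac]
    rw [hf]
    exact List.take_prefix m _

lemma claimB (w : List α) (g G i m : ℕ) (hi : 1 ≤ i) (hin : i ≤ w.length) (hm1 : 1 ≤ m)
    (hmem : ∃ u v : List α, u.length = m ∧ g ≤ v.length ∧ v.length < G ∧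
      (u ++ v) <:+ fac w 1 (i - 1) ∧ u <+: fac w i w.length) :
    ∃ j : ℕ, 1 ≤ j ∧ j < i ∧ max 1 (i - j - G + 1) ≤ min (LCP w j i) (i - j - g) ∧
      m ≤ min (LCP w j i) (i - j - g) := by
  obtain ⟨u, v, hu, hvg, hvG, hsuf, hpre⟩ := hmem
  have hf1 : fac w 1 (i - 1) = w.take (i - 1) := by simp [fac]
  have hf2 : fac w i w.length = w.drop (i - 1) := by simp [fac]
  rw [hf1] at hsuf
  rw [hf2] at hpre
  obtain ⟨t, ht⟩ := hsuf
  obtain ⟨s, hs⟩ := hpre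
  have hlt := congrArg List.length ht
  simp only [List.length_append, List.length_take, hu] at hlt
  have hm2 := congrArg List.length hs
  simp only [List.length_append, List.length_drop, hu] at hm2
  refine ⟨t.length + 1, by omega, by omega, ?_, ?_⟩
  all_goals {
    have hLCP : m ≤ LCP w (t.length + 1) i := by
      apply le_LCP
      · omega
      · omega
      · intro t' ht'
        have e1 : w[t.length + t']? = u[t']? := by
          have h1 : (w.take (i - 1))[t.length + t']? = w[t.length + t']? := by
            rw [List.getElem?_take, if_pos (by omega)]
          rw [← h1, ← ht, List.getElem?_append, if_neg (by omega),
            show t.length + t' - t.length = t' by omega,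
            List.getElem?_append, if_pos (by omega)]
        have e2 : w[i - 1 + t']? = u[t']? := by
          rw [← List.getElem?_drop, ← hs, List.getElem?_append, if_pos (by omega)]
        simp only [ltr]
        rw [show t.length + 1 + t' - 1 = t.length + t' by omega,
          show i + t' - 1 = i - 1 + t' by omega, e1, e2]
    omega
  }

theorem LPFgG_eq_max_min_LCP
    (w : List α) (n : ℕ) (hlen : w.length = n) (hn : 1 ≤ n)
    (g G : ℕ) (hgG : g < G) (hGn : G ≤ n)
    (i : ℕ) (hi : 1 ≤ i) (hin : i ≤ n) :
    LPFgG w g G i =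
      sSup ({0} ∪ {m : ℕ | ∃ j : ℕ, 1 ≤ j ∧ j < i ∧
        m = min (LCP w j i) (i - j - g) ∧ max 1 (i - j - G + 1) ≤ m}) := by
  subst hlen
  have hBddB : BddAbove ({0} ∪ {m : ℕ | ∃ j : ℕ, 1 ≤ j ∧ j < i ∧
      m = min (LCP w j i) (i - j - g) ∧ max 1 (i - j - G + 1) ≤ m}) := by
    refine ⟨w.length, fun m hm => ?_⟩
    rcases hm with hm | ⟨j, hj1, hji, hmeq, hmax⟩
    · simp only [Set.mem_singleton_iff] at hm
      omega
    · omega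
  have hBddA : BddAbove {m | ∃ u v : List α, u.length = m ∧ g ≤ v.length ∧ v.length < G ∧
      (u ++ v) <:+ fac w 1 (i - 1) ∧ u <+: fac w i w.length} := by
    refine ⟨w.length, fun m hm => ?_⟩
    obtain ⟨u, v, hu, _, _, _, hpre⟩ := hm
    have hl := hpre.length_le
    simp only [fac, List.length_drop, List.length_take] at hl
    omega
  apply le_antisymm
  · unfold LPFgG
    refine csSup_le' ?_
    intro m hm
    rcases Nat.eq_zero_or_pos m with rfl | hm1
    · exact Nat.zero_le _
    · obtain ⟨j, hj1, hji, hmax, hle⟩ := claimB w g G i m hi (by omega) hm1 hm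
      exact le_trans hle (le_csSup hBddB (Or.inr ⟨j, hj1, hji, rfl, hmax⟩))
  · refine csSup_le' ?_
    intro m hm
    rcases hm with hm | ⟨j, hj1, hji, hmeq, hmax⟩
    · simp only [Set.mem_singleton_iff] at hm
      subst hm
      exact Nat.zero_le _
    · have hmem := claimA w g G i j m hj1 hji (by omega) (by omega)
        (by omega) (by omega) (by omega)
      exact le_csSup hBddA hmem
end
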